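/- arXiv:math/0502087 — 2 statements merged into one kernel-verified Lean document; each statement's English description precedes it below -/
import Mathlib

section
/- Let n ≥ 2 and let q : V_n → F_2 be a Boolean function whose Walsh–Hadamard transform q̂ is nonzero at exactly four points λ₁, λ₂, λ₃, λ₄ ∈ V_n. Then λ₁ + λ₂ + λ₃ + λ₄ = 0, and there exist γ₁, γ₂, γ₃, γ₄ ∈ F_2 with γ₁+γ₂+γ₃+γ₄ = 1 such that q̂(λᵢ) = (−1)^{γᵢ} · 2^{n−1} for each i; moreover q(x) = l₁(x)l₂(x) + l₁(x)l₃(x) + l₂(x)l₃(x) where lᵢ(x) = ⟨λᵢ,x⟩ + γᵢ. -/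
open Finset

def ip {n : ℕ} (a b : Fin n → ZMod 2) : ZMod 2 := ∑ i, a i * b i

def wht {n : ℕ} (f : (Fin n → ZMod 2) → ZMod 2) (l : Fin n → ZMod 2) : ℤ :=
  ∑ x : Fin n → ZMod 2, (-1 : ℤ) ^ (f x + ip l x).val

def chi (u : ZMod 2) : ℤ := (-1) ^ u.val

lemma chi_add : ∀ u v : ZMod 2, chi (u + v) = chi u * chi v := by decide

lemma chi_sq : ∀ u : ZMod 2, chi u * chi u = 1 := by decide

lemma ip_comm {n : ℕ} (a b : Fin n → ZMod 2) : ip a b = ip b a := by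
  simp [ip, mul_comm]

lemma ip_add_right {n : ℕ} (a x y : Fin n → ZMod 2) : ip a (x + y) = ip a x + ip a y := by
  simp [ip, Pi.add_apply, mul_add, Finset.sum_add_distrib]

lemma ip_add_left {n : ℕ} (a b x : Fin n → ZMod 2) : ip (a + b) x = ip a x + ip b x := by
  simp [ip, Pi.add_apply, add_mul, Finset.sum_add_distrib]

lemma ip_zero_left {n : ℕ} (x : Fin n → ZMod 2) : ip 0 x = 0 := by simp [ip]

lemma wht_eq {n : ℕ} (q : (Fin n → ZMod 2) → ZMod 2) (l : Fin n → ZMod 2) :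
    wht q l = ∑ x : Fin n → ZMod 2, chi (q x) * chi (ip l x) := by
  show ∑ x : Fin n → ZMod 2, chi (q x + ip l x) = _
  simp_rw [chi_add]

lemma vadd_eq_zero {n : ℕ} (u v : Fin n → ZMod 2) : u + v = 0 ↔ u = v := by
  constructor
  · intro h; funext i
    exact (by decide : ∀ a b : ZMod 2, a + b = 0 → a = b) _ _ (congrFun h i)
  · rintro rfl; funext i
    exact (by decide : ∀ a : ZMod 2, a + a = 0) _

lemma ortho {n : ℕ} (a : Fin n → ZMod 2) :
    ∑ x : Fin n → ZMod 2, chi (ip a x) = if a = 0 then 2 ^ n else 0 := by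
  split_ifs with h
  · subst h
    have h1 : chi (0 : ZMod 2) = 1 := by decide
    simp only [ip_zero_left, h1, Finset.sum_const, Finset.card_univ, nsmul_eq_mul, mul_one]
    simp [Fintype.card_fun]
  · obtain ⟨j, hj⟩ : ∃ j, a j ≠ 0 := by
      by_contra hc; push_neg at hc; exact h (funext fun i => hc i)
    set c : Fin n → ZMod 2 := Pi.single j 1 with hc
    have hipc : ip a c = 1 := by
      have hj1 : a j = 1 := (by decide : ∀ u : ZMod 2, u ≠ 0 → u = 1) _ hj
      simp [ip, hc, Pi.single_apply, mul_ite, Finset.sum_ite_eq', hj1]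
    have key : ∑ x : Fin n → ZMod 2, chi (ip a (x + c))
        = ∑ x : Fin n → ZMod 2, chi (ip a x) :=
      Fintype.sum_equiv (Equiv.addRight c) _ _ (fun x => rfl)
    have key2 : ∀ x, chi (ip a (x + c)) = - chi (ip a x) := by
      intro x
      rw [ip_add_right, hipc]
      exact (by decide : ∀ u : ZMod 2, chi (u + 1) = - chi u) _
    simp_rw [key2, Finset.sum_neg_distrib] at key
    linarith

lemma inv_formula {n : ℕ} (q : (Fin n → ZMod 2) → ZMod 2) (x : Fin n → ZMod 2) :
    ∑ μ : Fin n → ZMod 2, wht q μ * chi (ip μ x) = 2 ^ n * chi (q x) := by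
  have step1 : ∀ μ, wht q μ * chi (ip μ x)
      = ∑ y : Fin n → ZMod 2, chi (q y) * chi (ip (y + x) μ) := by
    intro μ
    rw [wht_eq, Finset.sum_mul]
    refine Finset.sum_congr rfl fun y _ => ?_
    rw [mul_assoc, ← chi_add, ← ip_add_right, ip_comm]
  simp_rw [step1]
  rw [Finset.sum_comm]
  have step2 : ∀ y : Fin n → ZMod 2,
      ∑ μ : Fin n → ZMod 2, chi (q y) * chi (ip (y + x) μ)
      = chi (q y) * (if y = x then 2 ^ n else 0) := by
    intro y
    rw [← Finset.mul_sum, ortho]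
    congr 1
    simp [vadd_eq_zero]
  simp_rw [step2, mul_ite, mul_zero]
  rw [Finset.sum_ite_eq' Finset.univ x (fun y => chi (q y) * 2 ^ n)]
  simp [mul_comm]

lemma conv_formula {n : ℕ} (q : (Fin n → ZMod 2) → ZMod 2) (a : Fin n → ZMod 2) :
    ∑ μ : Fin n → ZMod 2, wht q μ * wht q (μ + a)
      = 2 ^ n * (if a = 0 then 2 ^ n else 0) := by
  have step1 : ∀ μ, wht q μ * wht q (μ + a)
      = ∑ y : Fin n → ZMod 2, (chi (q y) * chi (ip a y)) * (wht q μ * chi (ip μ y)) := by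
    intro μ
    rw [wht_eq q (μ + a), Finset.mul_sum]
    refine Finset.sum_congr rfl fun y _ => ?_
    rw [ip_add_left, chi_add]
    ring
  simp_rw [step1]
  rw [Finset.sum_comm]
  have step2 : ∀ y : Fin n → ZMod 2,
      ∑ μ : Fin n → ZMod 2, (chi (q y) * chi (ip a y)) * (wht q μ * chi (ip μ y))
      = (chi (q y) * chi (ip a y)) * (2 ^ n * chi (q y)) := by
    intro y
    rw [← Finset.mul_sum, inv_formula]
  simp_rw [step2]
  have step3 : ∀ y : Fin n → ZMod 2,
      (chi (q y) * chi (ip a y)) * (2 ^ n * chi (q y)) = 2 ^ n * chi (ip a y) := by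
    intro y
    have h := chi_sq (q y)
    linear_combination (2 ^ n * chi (ip a y)) * h
  simp_rw [step3]
  rw [← Finset.mul_sum, ortho]

lemma sum_support {n : ℕ} (q : (Fin n → ZMod 2) → ZMod 2)
    (lam : Fin 4 → (Fin n → ZMod 2)) (hlam : Function.Injective lam)
    (hsupp : ∀ μ, wht q μ ≠ 0 ↔ μ ∈ Set.range lam) (g : (Fin n → ZMod 2) → ℤ) :
    ∑ μ : Fin n → ZMod 2, wht q μ * g μ = ∑ i : Fin 4, wht q (lam i) * g (lam i) := by
  have himg : ∑ μ ∈ Finset.univ.image lam, wht q μ * g μ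
      = ∑ i : Fin 4, wht q (lam i) * g (lam i) :=
    Finset.sum_image (fun i _ j _ h => hlam h)
  rw [← himg]
  refine (Finset.sum_subset (Finset.subset_univ _) ?_).symm
  intro μ _ hμ
  have h0 : wht q μ = 0 := by
    by_contra hne
    obtain ⟨i, rfl⟩ := (hsupp μ).mp hne
    exact hμ (Finset.mem_image.mpr ⟨i, Finset.mem_univ _, rfl⟩)
  rw [h0, zero_mul]

theorem Q_spectrum (n : ℕ) (hn : 2 ≤ n) (q : (Fin n → ZMod 2) → ZMod 2)
    (lam : Fin 4 → (Fin n → ZMod 2)) (hlam : Function.Injective lam)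
    (hsupp : ∀ μ, wht q μ ≠ 0 ↔ μ ∈ Set.range lam) :
    (∑ i, lam i = 0) ∧
    ∃ γ : Fin 4 → ZMod 2, (∑ i, γ i = 1) ∧
      (∀ i, wht q (lam i) = (-1 : ℤ) ^ (γ i).val * 2 ^ (n - 1)) ∧
      (∀ x, q x = (ip (lam 0) x + γ 0) * (ip (lam 1) x + γ 1)
               + (ip (lam 0) x + γ 0) * (ip (lam 2) x + γ 2)
               + (ip (lam 1) x + γ 1) * (ip (lam 2) x + γ 2)) := by
  have hw : ∀ i, wht q (lam i) ≠ 0 := fun i => (hsupp (lam i)).mpr ⟨i, rfl⟩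
  have conv4 : ∀ a : Fin n → ZMod 2,
      wht q (lam 0) * wht q (lam 0 + a) + wht q (lam 1) * wht q (lam 1 + a)
       + wht q (lam 2) * wht q (lam 2 + a) + wht q (lam 3) * wht q (lam 3 + a)
      = 2 ^ n * (if a = 0 then 2 ^ n else 0) := by
    intro a
    have h := conv_formula q a
    rw [sum_support q lam hlam hsupp (fun μ => wht q (μ + a)), Fin.sum_univ_four] at h
    exact h
  -- Step 1: the four points sum to zero
  have hs : lam 0 + lam 1 + lam 2 + lam 3 = 0 := by
    by_contra hs0
    have ha : lam 0 + lam 1 ≠ 0 := fun h =>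
      hlam.ne (show (0 : Fin 4) ≠ 1 by decide) ((vadd_eq_zero _ _).mp h)
    have h01 : lam 0 + (lam 0 + lam 1) = lam 1 := funext fun i =>
      (by decide : ∀ a b : ZMod 2, a + (a + b) = b) _ _
    have h10 : lam 1 + (lam 0 + lam 1) = lam 0 := funext fun i =>
      (by decide : ∀ a b : ZMod 2, b + (a + b) = a) _ _
    have h2 : wht q (lam 2 + (lam 0 + lam 1)) = 0 := by
      by_contra hne2
      obtain ⟨i, hi⟩ := (hsupp _).mp hne2
      fin_cases i
      · exact hlam.ne (show (2 : Fin 4) ≠ 1 by decide)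
          (funext fun k => (by decide : ∀ a b c : ZMod 2, a = c + (a + b) → c = b)
            _ _ _ (congrFun hi k))
      · exact hlam.ne (show (2 : Fin 4) ≠ 0 by decide)
          (funext fun k => (by decide : ∀ a b c : ZMod 2, b = c + (a + b) → c = a)
            _ _ _ (congrFun hi k))
      · exact ha
          (funext fun k => (by decide : ∀ a b c : ZMod 2, c = c + (a + b) → a + b = 0)
            _ _ _ (congrFun hi k))
      · exact hs0
          (funext fun k => (by decide : ∀ a b c d : ZMod 2, d = c + (a + b) → a + b + c + d = 0)
            _ _ _ _ (congrFun hi k))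
    have h3 : wht q (lam 3 + (lam 0 + lam 1)) = 0 := by
      by_contra hne3
      obtain ⟨i, hi⟩ := (hsupp _).mp hne3
      fin_cases i
      · exact hlam.ne (show (3 : Fin 4) ≠ 1 by decide)
          (funext fun k => (by decide : ∀ a b c : ZMod 2, a = c + (a + b) → c = b)
            _ _ _ (congrFun hi k))
      · exact hlam.ne (show (3 : Fin 4) ≠ 0 by decide)
          (funext fun k => (by decide : ∀ a b c : ZMod 2, b = c + (a + b) → c = a)
            _ _ _ (congrFun hi k))
      · exact hs0
          (funext fun k => (by decide : ∀ a b c d : ZMod 2, c = d + (a + b) → a + b + c + d = 0)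
            _ _ _ _ (congrFun hi k))
      · exact ha
          (funext fun k => (by decide : ∀ a b c : ZMod 2, c = c + (a + b) → a + b = 0)
            _ _ _ (congrFun hi k))
    have h := conv4 (lam 0 + lam 1)
    rw [h01, h10, h2, h3, if_neg ha] at h
    have : wht q (lam 0) * wht q (lam 1) = 0 := by linarith
    exact mul_ne_zero (hw 0) (hw 1) this
  -- convenient abbreviations
  have w0 := hw 0; have w1 := hw 1; have w2 := hw 2; have w3 := hw 3
  -- relation from a = lam 0 + lam 1
  have e0 : wht q (lam 0) * wht q (lam 1) = -(wht q (lam 2) * wht q (lam 3)) := by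
    have ha : lam 0 + lam 1 ≠ 0 := fun h =>
      hlam.ne (show (0 : Fin 4) ≠ 1 by decide) ((vadd_eq_zero _ _).mp h)
    have h := conv4 (lam 0 + lam 1)
    rw [if_neg ha] at h
    rw [show lam 0 + (lam 0 + lam 1) = lam 1 from funext fun k =>
      (by decide : ∀ a b : ZMod 2, a + (a + b) = b) _ _] at h
    rw [show lam 1 + (lam 0 + lam 1) = lam 0 from funext fun k =>
      (by decide : ∀ a b : ZMod 2, b + (a + b) = a) _ _] at h
    rw [show lam 2 + (lam 0 + lam 1) = lam 3 from funext fun k =>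
      (by decide : ∀ a b c d : ZMod 2, a + b + c + d = 0 → c + (a + b) = d) _ _ _ _
        (congrFun hs k)] at h
    rw [show lam 3 + (lam 0 + lam 1) = lam 2 from funext fun k =>
      (by decide : ∀ a b c d : ZMod 2, a + b + c + d = 0 → d + (a + b) = c) _ _ _ _
        (congrFun hs k)] at h
    linarith
  -- relation from a = lam 0 + lam 2
  have e1 : wht q (lam 0) * wht q (lam 2) = -(wht q (lam 1) * wht q (lam 3)) := by
    have ha : lam 0 + lam 2 ≠ 0 := fun h =>
      hlam.ne (show (0 : Fin 4) ≠ 2 by decide) ((vadd_eq_zero _ _).mp h)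
    have h := conv4 (lam 0 + lam 2)
    rw [if_neg ha] at h
    rw [show lam 0 + (lam 0 + lam 2) = lam 2 from funext fun k =>
      (by decide : ∀ a c : ZMod 2, a + (a + c) = c) _ _] at h
    rw [show lam 2 + (lam 0 + lam 2) = lam 0 from funext fun k =>
      (by decide : ∀ a c : ZMod 2, c + (a + c) = a) _ _] at h
    rw [show lam 1 + (lam 0 + lam 2) = lam 3 from funext fun k =>
      (by decide : ∀ a b c d : ZMod 2, a + b + c + d = 0 → b + (a + c) = d) _ _ _ _
        (congrFun hs k)] at h
    rw [show lam 3 + (lam 0 + lam 2) = lam 1 from funext fun k =>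
      (by decide : ∀ a b c d : ZMod 2, a + b + c + d = 0 → d + (a + c) = b) _ _ _ _
        (congrFun hs k)] at h
    linarith
  -- relation from a = lam 0 + lam 3
  have e2 : wht q (lam 0) * wht q (lam 3) = -(wht q (lam 1) * wht q (lam 2)) := by
    have ha : lam 0 + lam 3 ≠ 0 := fun h =>
      hlam.ne (show (0 : Fin 4) ≠ 3 by decide) ((vadd_eq_zero _ _).mp h)
    have h := conv4 (lam 0 + lam 3)
    rw [if_neg ha] at h
    rw [show lam 0 + (lam 0 + lam 3) = lam 3 from funext fun k =>
      (by decide : ∀ a d : ZMod 2, a + (a + d) = d) _ _] at h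
    rw [show lam 3 + (lam 0 + lam 3) = lam 0 from funext fun k =>
      (by decide : ∀ a d : ZMod 2, d + (a + d) = a) _ _] at h
    rw [show lam 1 + (lam 0 + lam 3) = lam 2 from funext fun k =>
      (by decide : ∀ a b c d : ZMod 2, a + b + c + d = 0 → b + (a + d) = c) _ _ _ _
        (congrFun hs k)] at h
    rw [show lam 2 + (lam 0 + lam 3) = lam 1 from funext fun k =>
      (by decide : ∀ a b c d : ZMod 2, a + b + c + d = 0 → c + (a + d) = b) _ _ _ _
        (congrFun hs k)] at h
    linarith
  -- Parseval
  have pars : wht q (lam 0) * wht q (lam 0) + wht q (lam 1) * wht q (lam 1)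
      + wht q (lam 2) * wht q (lam 2) + wht q (lam 3) * wht q (lam 3)
      = (2 : ℤ) ^ n * 2 ^ n := by
    have h := conv4 0
    simp only [add_zero, if_true, eq_self_iff_true] at h
    linarith
  -- equal squares
  have sq01 : wht q (lam 0) * wht q (lam 0) = wht q (lam 1) * wht q (lam 1) :=
    mul_right_cancel₀ (mul_ne_zero w2 w3)
      (by linear_combination (wht q (lam 0) * wht q (lam 3)) * e1
            - (wht q (lam 1) * wht q (lam 3)) * e2)
  have sq02 : wht q (lam 0) * wht q (lam 0) = wht q (lam 2) * wht q (lam 2) :=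
    mul_right_cancel₀ (mul_ne_zero w1 w3)
      (by linear_combination (wht q (lam 0) * wht q (lam 3)) * e0
            - (wht q (lam 2) * wht q (lam 3)) * e2)
  have sq03 : wht q (lam 0) * wht q (lam 0) = wht q (lam 3) * wht q (lam 3) :=
    mul_right_cancel₀ (mul_ne_zero w1 w2)
      (by linear_combination (wht q (lam 0) * wht q (lam 2)) * e0
            - (wht q (lam 2) * wht q (lam 3)) * e1)
  -- the common absolute value
  set c : ℤ := 2 ^ (n - 1) with hcdef
  have hcpow : (2 : ℤ) ^ n = 2 * c := by
    rw [hcdef, ← pow_succ']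
    congr 1
    omega
  have hcne : c ≠ 0 := pow_ne_zero _ (by norm_num)
  have sqc : ∀ i, wht q (lam i) * wht q (lam i) = c * c := by
    have h0 : wht q (lam 0) * wht q (lam 0) = c * c := by
      have h4 : 4 * (wht q (lam 0) * wht q (lam 0)) = (2 * c) * (2 * c) := by
        rw [← hcpow]; linarith
      have h5 : (2 * c) * (2 * c) = 4 * (c * c) := by ring
      linarith
    intro i
    fin_cases i
    · exact h0
    · exact sq01.symm.trans h0
    · exact sq02.symm.trans h0
    · exact sq03.symm.trans h0
  have hpm : ∀ i, wht q (lam i) = c ∨ wht q (lam i) = -c := by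
    intro i
    have h : (wht q (lam i) - c) * (wht q (lam i) + c) = 0 := by
      linear_combination sqc i
    rcases mul_eq_zero.mp h with h | h
    · left; linarith
    · right; linarith
  -- define the signs
  refine ⟨by rw [Fin.sum_univ_four]; exact hs, fun i => if wht q (lam i) = c then 0 else 1,
    ?_, ?_, ?_⟩
  all_goals {
    have hwγ : ∀ i, wht q (lam i)
        = chi (if wht q (lam i) = c then (0 : ZMod 2) else 1) * c := by
      intro i
      by_cases h : wht q (lam i) = c
      · rw [if_pos h, (by decide : chi 0 = 1), one_mul, h]
      · rcases hpm i with h' | h'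
        · exact absurd h' h
        · rw [if_neg h, (by decide : chi 1 = -1), h']; ring
    set γ : Fin 4 → ZMod 2 := fun i => if wht q (lam i) = c then 0 else 1 with hγdef
    have hγ1 : γ 0 + γ 1 + γ 2 + γ 3 = 1 := by
      have hA : (chi (γ 0) * chi (γ 1)) * (c * c) = (-(chi (γ 2) * chi (γ 3))) * (c * c) := by
        have h := e0
        rw [hwγ 0, hwγ 1, hwγ 2, hwγ 3] at h
        linear_combination h
      have hB : chi (γ 0) * chi (γ 1) = -(chi (γ 2) * chi (γ 3)) :=
        mul_right_cancel₀ (mul_ne_zero hcne hcne) hA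
      have hC : chi (γ 0 + γ 1 + γ 2 + γ 3) = -1 := by
        rw [chi_add, chi_add, chi_add]
        linear_combination (chi (γ 2) * chi (γ 3)) * hB
          - (chi (γ 3) * chi (γ 3)) * (chi_sq (γ 2)) - chi_sq (γ 3)
      exact (by decide : ∀ u : ZMod 2, chi u = -1 → u = 1) _ hC
    first
    | (rw [Fin.sum_univ_four]; exact hγ1)
    | (intro i; exact hwγ i)
    | (intro x
       have hx := inv_formula q x
       rw [sum_support q lam hlam hsupp (fun μ => chi (ip μ x)), Fin.sum_univ_four] at hx
       rw [hwγ 0, hwγ 1, hwγ 2, hwγ 3, hcpow] at hx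
       have hx2 : chi (γ 0) * chi (ip (lam 0) x) + chi (γ 1) * chi (ip (lam 1) x)
           + chi (γ 2) * chi (ip (lam 2) x) + chi (γ 3) * chi (ip (lam 3) x)
           = 2 * chi (q x) :=
         mul_right_cancel₀ hcne (by linear_combination hx)
       have hipsum : ip (lam 0) x + ip (lam 1) x + ip (lam 2) x + ip (lam 3) x = 0 := by
         rw [← ip_add_left, ← ip_add_left, ← ip_add_left, hs, ip_zero_left]
       have hlsum : (ip (lam 0) x + γ 0) + (ip (lam 1) x + γ 1) + (ip (lam 2) x + γ 2)
           + (ip (lam 3) x + γ 3) = 1 := by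
         linear_combination hipsum + hγ1
       have hchi : chi (ip (lam 0) x + γ 0) + chi (ip (lam 1) x + γ 1)
           + chi (ip (lam 2) x + γ 2) + chi (ip (lam 3) x + γ 3) = 2 * chi (q x) := by
         rw [chi_add, chi_add, chi_add, chi_add]
         linear_combination hx2
       exact (by decide : ∀ a b c d e : ZMod 2, a + b + c + d = 1 →
           chi a + chi b + chi c + chi d = 2 * chi e → e = a * b + a * c + b * c)
         _ _ _ _ _ hlsum hchi) }
end

section
/- Let t(d) be the number of signed matrices obtained as follows: choose a d×d 0-1 matrix T with exactly two ones in each row and column, replace T by T ⊗ [[1,1],[1,1]], and assign signs ±1 to the ones so that the product of nonzero entries in every row and every column of the resulting 2d×2d matrix equals −1. Then t(d) = 2^{4d} · (d!)² · Σ_{i=0}^{d} (−1)^i / i!. -/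
open Finset

def omegaSet {ι κ : Type*} [Fintype ι] [Fintype κ] [DecidableEq ℤ]
    (A : Matrix ι κ ℤ) : Set (Matrix ι κ ℤ) :=
  {C | (∀ i j, (A i j = 0 → C i j = 0) ∧ (A i j = 1 → C i j = 1 ∨ C i j = -1)) ∧
       (∀ i, ∏ j, (if C i j = 0 then 1 else C i j) = -1) ∧
       (∀ j, ∏ i, (if C i j = 0 then 1 else C i j) = -1)}

def TwoPerLine {d : ℕ} (B : Matrix (Fin d) (Fin d) ℤ) : Prop :=
  (∀ i j, B i j = 0 ∨ B i j = 1) ∧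
  (∀ i, ∑ j, B i j = 2) ∧ (∀ j, ∑ i, B i j = 2)

def MinimalTwoPerLine {d : ℕ} (B : Matrix (Fin d) (Fin d) ℤ) : Prop :=
  TwoPerLine B ∧
  ∀ s t : Finset (Fin d), s.Nonempty →
    (∀ i ∈ s, ∑ j ∈ t, B i j = 2) → (∀ j ∈ t, ∑ i ∈ s, B i j = 2) →
    s = Finset.univ ∧ t = Finset.univ

def blow {d : ℕ} (T : Matrix (Fin d) (Fin d) ℤ) :
    Matrix (Fin d × Fin 2) (Fin d × Fin 2) ℤ :=
  fun i j => T i.1 j.1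

/-!
Write a signing of `T ⊗ J₂` blockwise: the block at a one of `T` is `x • (1, r; c, r c p)` with
signs `p, r, c, x`. The row and column conditions then decouple: `r` must have row products `-1`,
`c` column products `-1`, `p` all line products `1`, and `x` is free. Writing
`T = P_σ + P_τ` (Hall's theorem), `r`, `c` and `x` contribute `2^d`, `2^d` and `4^d` choices,
while the admissible `p`, like the ordered decompositions of `T` into two permutation matrices,
correspond to sign functions constant on the orbits of `τ⁻¹ σ`. Summing over `T`, the count is
`2^(4d)` times the number of pairs `(σ, τ)` with `σ i ≠ τ i` for all `i`, that is `d! · D_d`.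
-/

open Equiv
open scoped Matrix

lemma units_mul_mul_cancel_left (x r : ℤˣ) : x * (x * r) = r := by
  rw [← mul_assoc, Int.units_mul_self, one_mul]

lemma units_mul_mul_mul_cancel (x a b e : ℤˣ) : x * a * (x * b * a * e) = b * e := by
  calc x * a * (x * b * a * e) = (x * x) * (a * a) * (b * e) := by ac_rfl
    _ = b * e := by simp [Int.units_mul_self]

lemma units_block_prod_eq (x a b e : ℤˣ) : x * (x * a) * (x * b) * (x * a * b * e) = e := by
  calc x * (x * a) * (x * b) * (x * a * b * e) = (x * x) * (x * x) * (a * a) * (b * b) * e := by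
        ac_rfl
    _ = e := by simp [Int.units_mul_self]

lemma units_block_eq_one_iff (x r c p : ℤˣ) :
    (x = 1 ∧ x * r = 1) ∧ (x * c = 1 ∧ x * r * c * p = 1) ↔ p = 1 ∧ r = 1 ∧ c = 1 ∧ x = 1 := by
  constructor
  · rintro ⟨⟨rfl, hr⟩, hc, hp⟩
    simp_all
  · rintro ⟨rfl, rfl, rfl, rfl⟩
    simp

lemma units_mul_eq_neg_one_iff (u v : ℤˣ) : u * v = -1 ↔ v = -u := by
  rcases Int.units_eq_one_or u with rfl | rfl <;> rcases Int.units_eq_one_or v with rfl | rfl <;>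
    decide

lemma units_mul_eq_one_iff (u v : ℤˣ) : u * v = 1 ↔ v = u := by
  rw [mul_eq_one_iff_eq_inv, Int.units_inv_eq_self, eq_comm]

section SignArray

variable {ι κ : Type*}

/-- A sign array `E` on the support of `A` stands for the signed matrix `A i j * E i j`; its
entries off the support are normalised to `1`. -/
def SupportedOn (A : Matrix ι κ ℤ) (E : ι → κ → ℤˣ) : Prop :=
  ∀ i j, A i j = 0 → E i j = 1

def rowProd [Fintype κ] (E : ι → κ → ℤˣ) (i : ι) : ℤˣ := ∏ j, E i j

def colProd [Fintype ι] (E : ι → κ → ℤˣ) (j : κ) : ℤˣ := ∏ i, E i j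

lemma rowProd_mul [Fintype κ] (E F : ι → κ → ℤˣ) : rowProd (E * F) = rowProd E * rowProd F :=
  funext fun _ => prod_mul_distrib

lemma colProd_mul [Fintype ι] (E F : ι → κ → ℤˣ) : colProd (E * F) = colProd E * colProd F :=
  funext fun _ => prod_mul_distrib

lemma supportedOn_transpose_iff {A : Matrix ι κ ℤ} {E : ι → κ → ℤˣ} :
    SupportedOn Aᵀ (fun j i => E i j) ↔ SupportedOn A E :=
  forall_comm

def colProdTransposeEquiv [Fintype ι] {A : Matrix ι κ ℤ} (u : κ → ℤˣ) :
    {E // SupportedOn A E ∧ colProd E = u} ≃ {E // SupportedOn Aᵀ E ∧ rowProd E = u} :=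
  (Equiv.piComm _).subtypeEquiv fun _ => and_congr supportedOn_transpose_iff.symm Iff.rfl

def unitOf (z : ℤ) : ℤˣ := if z = -1 then -1 else 1

lemma coe_unitOf {z : ℤ} (hz : z = 0 ∨ z = 1 ∨ z = -1) :
    (unitOf z : ℤ) = if z = 0 then 1 else z := by
  rcases hz with rfl | rfl | rfl <;> rfl

lemma unitOf_units (u : ℤˣ) : unitOf u = u := by
  rcases Int.units_eq_one_or u with rfl | rfl <;> rfl

lemma prod_unitOf_eq_neg_one_iff [Fintype κ] {f : κ → ℤ} (hf : ∀ j, f j = 0 ∨ f j = 1 ∨ f j = -1) :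
    ∏ j, unitOf (f j) = -1 ↔ ∏ j, (if f j = 0 then 1 else f j) = -1 := by
  rw [Units.ext_iff, Units.coe_prod, prod_congr rfl fun j _ => coe_unitOf (hf j)]
  rfl

def omegaSetEquiv [Fintype ι] [Fintype κ] (A : Matrix ι κ ℤ) (hA : ∀ i j, A i j = 0 ∨ A i j = 1) :
    omegaSet A ≃ {E : ι → κ → ℤˣ // SupportedOn A E ∧ rowProd E = -1 ∧ colProd E = -1} where
  toFun C :=
    have hC : ∀ i j, C.1 i j = 0 ∨ C.1 i j = 1 ∨ C.1 i j = -1 := fun i j => by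
      have := C.2.1 i j; rcases hA i j with h | h <;> simp_all
    ⟨fun i j => unitOf (C.1 i j), fun i j h => by simp [(C.2.1 i j).1 h, unitOf],
      funext fun i => (prod_unitOf_eq_neg_one_iff (hC i)).2 (C.2.2.1 i),
      funext fun j => (prod_unitOf_eq_neg_one_iff (hC · j)).2 (C.2.2.2 j)⟩
  invFun E :=
    have hE : ∀ i j, (if A i j * E.1 i j = 0 then 1 else A i j * E.1 i j) = E.1 i j := by
      intro i j; rcases hA i j with h | h <;> simp [h, E.2.1 i j]
    ⟨fun i j => A i j * E.1 i j, fun i j => by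
      rcases hA i j with h | h <;> simp [h, Int.units_eq_one_or],
      fun i => by simp_rw [hE, ← Units.coe_prod]; exact congrArg Units.val (congrFun E.2.2.1 i),
      fun j => by simp_rw [hE, ← Units.coe_prod]; exact congrArg Units.val (congrFun E.2.2.2 j)⟩
  left_inv C := by
    apply Subtype.ext; funext i j
    rcases hA i j with h | h
    · simp [h, (C.2.1 i j).1 h]
    · rcases (C.2.1 i j).2 h with h' | h' <;> simp [h, h', unitOf]
  right_inv E := by
    apply Subtype.ext; funext i j
    rcases hA i j with h | h
    · simp [h, E.2.1 i j h, unitOf]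
    · simp [h, unitOf_units]

lemma eq_zero_iff_of_mem_omegaSet [Fintype ι] [Fintype κ] {A C : Matrix ι κ ℤ}
    (hA : ∀ i j, A i j = 0 ∨ A i j = 1) (hC : C ∈ omegaSet A) (i : ι) (j : κ) :
    A i j = 0 ↔ C i j = 0 := by
  refine ⟨(hC.1 i j).1, fun h => ?_⟩
  rcases hA i j with h' | h'
  · exact h'
  · rcases (hC.1 i j).2 h' with h'' | h'' <;> simp [h''] at h

lemma eq_of_mem_omegaSet [Fintype ι] [Fintype κ] {A B C : Matrix ι κ ℤ}
    (hA : ∀ i j, A i j = 0 ∨ A i j = 1) (hB : ∀ i j, B i j = 0 ∨ B i j = 1)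
    (hCA : C ∈ omegaSet A) (hCB : C ∈ omegaSet B) : A = B := by
  funext i j
  have := (eq_zero_iff_of_mem_omegaSet hA hCA i j).trans
    (eq_zero_iff_of_mem_omegaSet hB hCB i j).symm
  rcases hA i j with h | h <;> rcases hB i j with h' | h' <;> simp_all

/-- The block of `E` at `(i, j)` is `x • (1, r; c, r c p)`, where `blockCoords E = (p, r, c, x)`
evaluated at `i j`. -/
def blockCoords :
    (ι × Fin 2 → κ × Fin 2 → ℤˣ) ≃
      (ι → κ → ℤˣ) × (ι → κ → ℤˣ) × (ι → κ → ℤˣ) × (ι → κ → ℤˣ) where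
  toFun E :=
    (fun i j => E (i, 0) (j, 0) * E (i, 0) (j, 1) * E (i, 1) (j, 0) * E (i, 1) (j, 1),
      fun i j => E (i, 0) (j, 0) * E (i, 0) (j, 1),
      fun i j => E (i, 0) (j, 0) * E (i, 1) (j, 0),
      fun i j => E (i, 0) (j, 0))
  invFun q := fun ia jb =>
    ![![q.2.2.2, q.2.2.2 * q.2.1], ![q.2.2.2 * q.2.2.1, q.2.2.2 * q.2.1 * q.2.2.1 * q.1]]
      ia.2 jb.2 ia.1 jb.1
  left_inv E := by
    funext ⟨i, a⟩ ⟨j, b⟩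
    fin_cases a <;> fin_cases b
    · rfl
    · exact units_mul_mul_cancel_left _ _
    · exact units_mul_mul_cancel_left _ _
    · exact units_block_prod_eq _ _ _ _
  right_inv q := by
    obtain ⟨p, r, c, x⟩ := q
    simp only [Prod.mk.injEq]
    refine ⟨?_, ?_, ?_, rfl⟩ <;> funext i j
    · exact units_block_prod_eq _ _ _ _
    · exact units_mul_mul_cancel_left _ _
    · exact units_mul_mul_cancel_left _ _

lemma rowProd_prod_fin_two [Fintype κ] (E : ι × Fin 2 → κ × Fin 2 → ℤˣ) (i : ι) (a : Fin 2) :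
    rowProd E (i, a) = rowProd (fun i j => E (i, a) (j, 0) * E (i, a) (j, 1)) i := by
  simp [rowProd, Fintype.prod_prod_type]

lemma colProd_prod_fin_two [Fintype ι] (E : ι × Fin 2 → κ × Fin 2 → ℤˣ) (j : κ) (b : Fin 2) :
    colProd E (j, b) = colProd (fun i j => E (i, 0) (j, b) * E (i, 1) (j, b)) j := by
  simp [colProd, Fintype.prod_prod_type]

variable (p r c x : ι → κ → ℤˣ)

lemma supportedOn_blockCoords_symm_iff (T : Matrix ι κ ℤ) :
    SupportedOn (fun i j => T i.1 j.1) (blockCoords.symm (p, r, c, x)) ↔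
      SupportedOn T p ∧ SupportedOn T r ∧ SupportedOn T c ∧ SupportedOn T x := by
  simp only [SupportedOn, Prod.forall, Fin.forall_fin_two, ← forall_and]
  exact forall₂_congr fun i j => imp_congr_right fun _ => units_block_eq_one_iff _ _ _ _

lemma rowProd_blockCoords_symm_eq_neg_one_iff [Fintype κ] :
    rowProd (blockCoords.symm (p, r, c, x)) = -1 ↔ rowProd p = 1 ∧ rowProd r = -1 := by
  have h0 : (fun i j => blockCoords.symm (p, r, c, x) (i, 0) (j, 0) *
      blockCoords.symm (p, r, c, x) (i, 0) (j, 1)) = r := by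
    funext i j; exact units_mul_mul_cancel_left _ _
  have h1 : (fun i j => blockCoords.symm (p, r, c, x) (i, 1) (j, 0) *
      blockCoords.symm (p, r, c, x) (i, 1) (j, 1)) = r * p := by
    funext i j; exact units_mul_mul_mul_cancel _ _ _ _
  simp only [funext_iff, Prod.forall, Fin.forall_fin_two, rowProd_prod_fin_two, h0, h1,
    rowProd_mul, Pi.mul_apply, Pi.neg_apply, Pi.one_apply, ← forall_and]
  refine forall_congr' fun i => and_comm.trans (and_congr_left fun hr => ?_)
  rw [hr, neg_one_mul, neg_inj]

lemma colProd_blockCoords_symm_eq_neg_one_iff [Fintype ι] :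
    colProd (blockCoords.symm (p, r, c, x)) = -1 ↔ colProd p = 1 ∧ colProd c = -1 := by
  have h0 : (fun i j => blockCoords.symm (p, r, c, x) (i, 0) (j, 0) *
      blockCoords.symm (p, r, c, x) (i, 1) (j, 0)) = c := by
    funext i j; exact units_mul_mul_cancel_left _ _
  have h1 : (fun i j => blockCoords.symm (p, r, c, x) (i, 0) (j, 1) *
      blockCoords.symm (p, r, c, x) (i, 1) (j, 1)) = c * p := by
    funext i j; exact (congrArg _ (mul_assoc _ _ _)).trans (units_mul_mul_cancel_left _ _)
  simp only [funext_iff, Prod.forall, Fin.forall_fin_two, colProd_prod_fin_two, h0, h1,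
    colProd_mul, Pi.mul_apply, Pi.neg_apply, Pi.one_apply, ← forall_and]
  refine forall_congr' fun j => and_comm.trans (and_congr_left fun hc => ?_)
  rw [hc, neg_one_mul, neg_inj]

def blowUpEquiv [Fintype ι] [Fintype κ] (T : Matrix ι κ ℤ) :
    {E : ι × Fin 2 → κ × Fin 2 → ℤˣ //
        SupportedOn (fun i j => T i.1 j.1) E ∧ rowProd E = -1 ∧ colProd E = -1} ≃
      {P // SupportedOn T P ∧ rowProd P = 1 ∧ colProd P = 1} ×
        {R // SupportedOn T R ∧ rowProd R = -1} × {C // SupportedOn T C ∧ colProd C = -1} ×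
          {X // SupportedOn T X} :=
  (blockCoords.symm.subtypeEquiv fun ⟨p, r, c, x⟩ => by
      rw [supportedOn_blockCoords_symm_iff, rowProd_blockCoords_symm_eq_neg_one_iff,
        colProd_blockCoords_symm_eq_neg_one_iff]
      tauto).symm.trans <|
    Equiv.subtypeProdEquivProd.trans <| Equiv.prodCongr (Equiv.refl _) <|
      Equiv.subtypeProdEquivProd.trans <| Equiv.prodCongr (Equiv.refl _)
        Equiv.subtypeProdEquivProd

end SignArray

section PermPair

variable {ι : Type*}

lemma inv_apply_ne_inv_apply {σ τ : Perm ι} (hne : ∀ i, σ i ≠ τ i) (j : ι) : σ⁻¹ j ≠ τ⁻¹ j := by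
  intro h
  apply hne (σ⁻¹ j)
  conv_rhs => rw [h]
  simp

variable [DecidableEq ι]

def pairMatrix (σ τ : Perm ι) : Matrix ι ι ℤ := σ.permMatrix ℤ + τ.permMatrix ℤ

lemma permMatrix_apply_eq_ite (σ : Perm ι) (i j : ι) :
    σ.permMatrix ℤ i j = if σ i = j then 1 else 0 := by
  simp [eq_comm]

lemma pairMatrix_apply (σ τ : Perm ι) (i j : ι) :
    pairMatrix σ τ i j = (if σ i = j then 1 else 0) + (if τ i = j then 1 else 0) := by
  simp only [pairMatrix, Matrix.add_apply, permMatrix_apply_eq_ite]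

lemma pairMatrix_apply_eq_zero_iff {σ τ : Perm ι} {i j : ι} :
    pairMatrix σ τ i j = 0 ↔ σ i ≠ j ∧ τ i ≠ j := by
  rw [pairMatrix_apply]; split_ifs <;> simp_all

lemma transpose_pairMatrix (σ τ : Perm ι) : (pairMatrix σ τ)ᵀ = pairMatrix σ⁻¹ τ⁻¹ := by
  simp [pairMatrix]

lemma pairMatrix_eq_pairMatrix_iff {σ τ σ₀ τ₀ : Perm ι} (hne : ∀ i, σ₀ i ≠ τ₀ i) :
    pairMatrix σ τ = pairMatrix σ₀ τ₀ ↔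
      ∀ i, (σ i = σ₀ i ∧ τ i = τ₀ i) ∨ (σ i = τ₀ i ∧ τ i = σ₀ i) := by
  simp only [← Matrix.ext_iff, pairMatrix_apply]
  refine forall_congr' fun i => ⟨fun h => ?_, ?_⟩
  · have hit : ∀ j, (if σ i = j then (1 : ℤ) else 0) + (if τ i = j then 1 else 0) ≠ 0 →
        σ i = j ∨ τ i = j := by
      intro j; split_ifs <;> simp_all
    have h₀ := hit (σ₀ i) (by rw [h]; simp [(hne i).symm])
    have h₁ := hit (τ₀ i) (by rw [h]; simp [hne i])
    rcases h₀ with h₀ | h₀ <;> rcases h₁ with h₁ | h₁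
    · exact absurd (h₀.symm.trans h₁) (hne i)
    · exact Or.inl ⟨h₀, h₁⟩
    · exact Or.inr ⟨h₁, h₀⟩
    · exact absurd (h₀.symm.trans h₁) (hne i)
  · rintro (⟨h1, h2⟩ | ⟨h1, h2⟩) j <;> rw [h1, h2]
    exact add_comm _ _

lemma pairMatrix_apply_eq_zero_or_eq_one {σ τ : Perm ι}
    (hne : ∀ i, σ i ≠ τ i) (i j : ι) : pairMatrix σ τ i j = 0 ∨ pairMatrix σ τ i j = 1 := by
  rw [pairMatrix_apply]
  have := hne i
  split_ifs <;> simp_all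

variable [Fintype ι]

lemma sum_permMatrix_row (σ : Perm ι) (i : ι) : ∑ j, σ.permMatrix ℤ i j = 1 := by
  simp

lemma sum_permMatrix_col (σ : Perm ι) (j : ι) : ∑ i, σ.permMatrix ℤ i j = 1 := by
  simp [← Equiv.eq_symm_apply]

lemma exists_perm_forall_ne_zero {M : Matrix ι ι ℤ} {k : ℤ} (hk : 0 < k)
    (hM : ∀ i j, 0 ≤ M i j) (hrow : ∀ i, ∑ j, M i j = k) (hcol : ∀ j, ∑ i, M i j = k) :
    ∃ σ : Perm ι, ∀ i, M i (σ i) ≠ 0 := by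
  let f (i : ι) : Finset ι := {j | M i j ≠ 0}
  -- Hall's condition: the rows of `A` carry `k * #A`, all inside the columns `A.biUnion f`,
  -- whose total is `k * #(A.biUnion f)`.
  have hall (A : Finset ι) : #A ≤ #(A.biUnion f) := by
    have hA : ∑ i ∈ A, ∑ j ∈ A.biUnion f, M i j = #A * k := by
      rw [sum_congr rfl fun i hi => ?_, sum_const, nsmul_eq_mul]
      rw [← hrow i]
      refine sum_subset (subset_univ _) fun j _ hj => ?_
      by_contra h
      exact hj (mem_biUnion.2 ⟨i, hi, by simpa [f] using h⟩)
    have hle : ∑ i ∈ A, ∑ j ∈ A.biUnion f, M i j ≤ #(A.biUnion f) * k := by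
      calc ∑ i ∈ A, ∑ j ∈ A.biUnion f, M i j = ∑ j ∈ A.biUnion f, ∑ i ∈ A, M i j := sum_comm
        _ ≤ ∑ j ∈ A.biUnion f, ∑ i, M i j :=
          sum_le_sum fun j _ => sum_le_sum_of_subset_of_nonneg (subset_univ _) fun i _ _ => hM i j
        _ = #(A.biUnion f) * k := by simp [hcol]
    exact_mod_cast le_of_mul_le_mul_right (hA ▸ hle) hk
  obtain ⟨g, hg, hgf⟩ := (all_card_le_biUnion_card_iff_exists_injective f).1 hall
  exact ⟨.ofBijective g (Finite.injective_iff_bijective.1 hg), fun i => by simpa [f] using hgf i⟩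

lemma exists_eq_permMatrix {M : Matrix ι ι ℤ}
    (hM : ∀ i j, 0 ≤ M i j) (hrow : ∀ i, ∑ j, M i j = 1) (hcol : ∀ j, ∑ i, M i j = 1) :
    ∃ τ : Perm ι, M = τ.permMatrix ℤ := by
  obtain ⟨τ, hτ⟩ := exists_perm_forall_ne_zero one_pos hM hrow hcol
  refine ⟨τ, Matrix.ext fun i j => sub_eq_zero.1 ?_⟩
  have hle : ∀ j ∈ univ, 0 ≤ M i j - τ.permMatrix ℤ i j := by
    intro j _
    rw [permMatrix_apply_eq_ite]
    split_ifs with h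
    · subst h; have := hM i (τ i); have := hτ i; omega
    · simpa using hM i j
  refine (sum_eq_zero_iff_of_nonneg hle).1 ?_ j (mem_univ j)
  rw [sum_sub_distrib, hrow, sum_permMatrix_row, sub_self]

end PermPair

section TwoPerLine

variable {d : ℕ}

lemma twoPerLine_pairMatrix_iff {σ τ : Perm (Fin d)} :
    TwoPerLine (pairMatrix σ τ) ↔ ∀ i, σ i ≠ τ i := by
  refine ⟨fun h i hi => ?_, fun hne => ⟨pairMatrix_apply_eq_zero_or_eq_one hne, fun i => ?_,
    fun j => ?_⟩⟩
  · have := h.1 i (σ i)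
    rw [pairMatrix_apply, if_pos rfl, if_pos hi.symm] at this
    norm_num at this
  · simp only [pairMatrix, Matrix.add_apply, sum_add_distrib, sum_permMatrix_row]; norm_num
  · simp only [pairMatrix, Matrix.add_apply, sum_add_distrib, sum_permMatrix_col]; norm_num

lemma TwoPerLine.exists_pairMatrix_eq {T : Matrix (Fin d) (Fin d) ℤ} (hT : TwoPerLine T) :
    ∃ σ τ : Perm (Fin d), pairMatrix σ τ = T := by
  have hT₀ : ∀ i j, 0 ≤ T i j := fun i j => by rcases hT.1 i j with h | h <;> simp [h]
  obtain ⟨σ, hσ⟩ := exists_perm_forall_ne_zero two_pos hT₀ hT.2.1 hT.2.2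
  obtain ⟨τ, hτ⟩ := exists_eq_permMatrix (M := T - σ.permMatrix ℤ)
    (fun i j => by
      rw [Matrix.sub_apply, permMatrix_apply_eq_ite]
      split_ifs with h
      · subst h; have := hσ i; rcases hT.1 i (σ i) with h | h <;> simp_all
      · simpa using hT₀ i j)
    (fun i => by
      simp only [Matrix.sub_apply, sum_sub_distrib, hT.2.1, sum_permMatrix_row]; norm_num)
    (fun j => by
      simp only [Matrix.sub_apply, sum_sub_distrib, hT.2.2, sum_permMatrix_col]; norm_num)
  exact ⟨σ, τ, by rw [pairMatrix, ← hτ, add_sub_cancel]⟩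

end TwoPerLine

section PairSigns

variable {ι : Type*} [DecidableEq ι] {σ τ : Perm ι}

def pairSigns (σ τ : Perm ι) (a b : ι → ℤˣ) : ι → ι → ℤˣ :=
  fun i j => if σ i = j then a i else if τ i = j then b i else 1

lemma supportedOn_pairSigns (a b : ι → ℤˣ) : SupportedOn (pairMatrix σ τ) (pairSigns σ τ a b) :=
  fun i j h => by
    obtain ⟨h₁, h₂⟩ := pairMatrix_apply_eq_zero_iff.1 h
    simp [pairSigns, h₁, h₂]

lemma pairSigns_apply_left (a b : ι → ℤˣ) (i : ι) : pairSigns σ τ a b i (σ i) = a i :=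
  if_pos rfl

lemma pairSigns_apply_right (hne : ∀ i, σ i ≠ τ i) (a b : ι → ℤˣ) (i : ι) :
    pairSigns σ τ a b i (τ i) = b i := by
  simp [pairSigns, hne i]

lemma pairSigns_eq {E : ι → ι → ℤˣ} (hE : SupportedOn (pairMatrix σ τ) E) :
    pairSigns σ τ (fun i => E i (σ i)) (fun i => E i (τ i)) = E := by
  funext i j
  unfold pairSigns
  split_ifs with h₁ h₂
  · exact congrArg (E i) h₁
  · exact congrArg (E i) h₂
  · exact (hE i j (pairMatrix_apply_eq_zero_iff.2 ⟨h₁, h₂⟩)).symm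

variable [Fintype ι]

lemma rowProd_eq_mul_of_supportedOn (hne : ∀ i, σ i ≠ τ i) {E : ι → ι → ℤˣ}
    (hE : SupportedOn (pairMatrix σ τ) E) (i : ι) : rowProd E i = E i (σ i) * E i (τ i) :=
  prod_eq_mul _ _ (hne i)
    (fun j _ hj => hE i j (pairMatrix_apply_eq_zero_iff.2 ⟨Ne.symm hj.1, Ne.symm hj.2⟩))
    (by simp) (by simp)

lemma colProd_eq_mul_of_supportedOn (hne : ∀ i, σ i ≠ τ i) {E : ι → ι → ℤˣ}
    (hE : SupportedOn (pairMatrix σ τ) E) (j : ι) :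
    colProd E j = E (σ.symm j) j * E (τ.symm j) j := by
  refine rowProd_eq_mul_of_supportedOn (inv_apply_ne_inv_apply hne) (E := fun j i => E i j) ?_ j
  rw [← transpose_pairMatrix]
  exact supportedOn_transpose_iff.2 hE

def supportedOnPairEquiv (hne : ∀ i, σ i ≠ τ i) :
    {E // SupportedOn (pairMatrix σ τ) E} ≃ (ι → ℤˣ × ℤˣ) where
  toFun E i := (E.1 i (σ i), E.1 i (τ i))
  invFun f := ⟨pairSigns σ τ (fun i => (f i).1) (fun i => (f i).2), supportedOn_pairSigns _ _⟩
  left_inv E := Subtype.ext (pairSigns_eq E.2)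
  right_inv f := funext fun i =>
    Prod.ext (pairSigns_apply_left (fun i => (f i).1) (fun i => (f i).2) i)
      (pairSigns_apply_right hne (fun i => (f i).1) (fun i => (f i).2) i)

def rowProdNegOneEquiv (hne : ∀ i, σ i ≠ τ i) :
    {E // SupportedOn (pairMatrix σ τ) E ∧ rowProd E = -1} ≃ (ι → ℤˣ) where
  toFun E i := E.1 i (σ i)
  invFun a := ⟨pairSigns σ τ a (-a), supportedOn_pairSigns _ _, funext fun i => by
    rw [rowProd_eq_mul_of_supportedOn hne (supportedOn_pairSigns _ _), pairSigns_apply_left,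
      pairSigns_apply_right hne]
    simp [Int.units_mul_self]⟩
  left_inv E := by
    refine Subtype.ext ?_
    conv_rhs => rw [← pairSigns_eq E.2.1]
    refine congrArg (pairSigns σ τ _) (funext fun i => ?_)
    have h := congrFun E.2.2 i
    rw [rowProd_eq_mul_of_supportedOn hne E.2.1] at h
    exact ((units_mul_eq_neg_one_iff _ _).1 h).symm
  right_inv a := funext (pairSigns_apply_left _ _)

def colProdNegOneEquiv (hne : ∀ i, σ i ≠ τ i) :
    {E // SupportedOn (pairMatrix σ τ) E ∧ colProd E = -1} ≃ (ι → ℤˣ) :=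
  (colProdTransposeEquiv (-1)).trans <|
    (Equiv.subtypeEquivRight fun _ => by rw [transpose_pairMatrix]).trans
      (rowProdNegOneEquiv (inv_apply_ne_inv_apply hne))

lemma apply_right_eq_apply_left_of_rowProd_eq_one (hne : ∀ i, σ i ≠ τ i) {E : ι → ι → ℤˣ}
    (hE : SupportedOn (pairMatrix σ τ) E) {i : ι} (h : rowProd E i = 1) :
    E i (τ i) = E i (σ i) :=
  (units_mul_eq_one_iff _ _).1 (by rwa [← rowProd_eq_mul_of_supportedOn hne hE])

def rowColProdOneEquiv (hne : ∀ i, σ i ≠ τ i) :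
    {E // SupportedOn (pairMatrix σ τ) E ∧ rowProd E = 1 ∧ colProd E = 1} ≃
      {g : ι → ℤˣ // ∀ j, g (σ.symm j) = g (τ.symm j)} where
  toFun E := ⟨fun i => E.1 i (σ i), fun j => by
    have hcol := congrFun E.2.2.2 j
    rw [colProd_eq_mul_of_supportedOn hne E.2.1, Pi.one_apply, units_mul_eq_one_iff] at hcol
    have hrow := apply_right_eq_apply_left_of_rowProd_eq_one hne E.2.1 (congrFun E.2.2.1 (τ.symm j))
    simp only [apply_symm_apply] at hrow ⊢
    rw [← hrow, hcol]⟩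
  invFun g := ⟨pairSigns σ τ g.1 g.1, supportedOn_pairSigns _ _,
    funext fun i => by
      rw [rowProd_eq_mul_of_supportedOn hne (supportedOn_pairSigns _ _), pairSigns_apply_left,
        pairSigns_apply_right hne]
      exact Int.units_mul_self _,
    funext fun j => by
      rw [colProd_eq_mul_of_supportedOn hne (supportedOn_pairSigns _ _)]
      simp [pairSigns, g.2 j]⟩
  left_inv E := by
    refine Subtype.ext ?_
    conv_rhs => rw [← pairSigns_eq E.2.1]
    exact congrArg (pairSigns σ τ _) (funext fun i =>
      (apply_right_eq_apply_left_of_rowProd_eq_one hne E.2.1 (congrFun E.2.2.1 i)).symm)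
  right_inv g := Subtype.ext (funext (pairSigns_apply_left _ _))

end PairSigns

section Decompositions

variable {ι : Type*} {σ τ : Perm ι}

def switchFun (σ τ : Perm ι) (g : ι → ℤˣ) (i : ι) : ι := if g i = 1 then σ i else τ i

lemma switchFun_injective {g : ι → ℤˣ} (hg : ∀ j, g (σ.symm j) = g (τ.symm j)) :
    Function.Injective (switchFun σ τ g) := by
  intro i i' h
  unfold switchFun at h
  split_ifs at h with h₁ h₂ h₂
  · exact σ.injective h
  · have := hg (σ i)
    rw [σ.symm_apply_apply, h, τ.symm_apply_apply] at this
    exact absurd (this ▸ h₁) h₂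
  · have := hg (σ i')
    rw [σ.symm_apply_apply, ← h, τ.symm_apply_apply] at this
    exact absurd (this ▸ h₂) h₁
  · exact τ.injective h

noncomputable def switchPerm [Finite ι] (σ τ : Perm ι) (g : ι → ℤˣ)
    (hg : ∀ j, g (σ.symm j) = g (τ.symm j)) : Perm ι :=
  .ofBijective (switchFun σ τ g) (Finite.injective_iff_bijective.1 (switchFun_injective hg))

lemma decomposition_apply_eq_iff [DecidableEq ι] (hne : ∀ i, σ i ≠ τ i) {p : Perm ι × Perm ι}
    (hp : pairMatrix p.1 p.2 = pairMatrix σ τ) (j : ι) :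
    p.1 (σ.symm j) = σ (σ.symm j) ↔ p.1 (τ.symm j) = σ (τ.symm j) := by
  rw [pairMatrix_eq_pairMatrix_iff hne] at hp
  have ha := hp (σ.symm j)
  have hb := hp (τ.symm j)
  have hab : σ.symm j ≠ τ.symm j := inv_apply_ne_inv_apply hne j
  simp only [apply_symm_apply] at ha hb ⊢
  have := hne (τ.symm j)
  have := p.1.injective.eq_iff (a := σ.symm j) (b := τ.symm j)
  have := p.2.injective.eq_iff (a := σ.symm j) (b := τ.symm j)
  grind

/-- In each row a decomposition of `σ + τ` is either `(σ, τ)` or `(τ, σ)`; the sign records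
which, and two rows meeting in a column must make the same choice. -/
noncomputable def decompositionsEquiv [DecidableEq ι] [Finite ι] (hne : ∀ i, σ i ≠ τ i) :
    {p : Perm ι × Perm ι // pairMatrix p.1 p.2 = pairMatrix σ τ} ≃
      {g : ι → ℤˣ // ∀ j, g (σ.symm j) = g (τ.symm j)} where
  toFun p := ⟨fun i => if p.1.1 i = σ i then 1 else -1, fun j =>
    if_congr (decomposition_apply_eq_iff hne p.2 j) rfl rfl⟩
  invFun g := ⟨(switchPerm σ τ g g.2, switchPerm τ σ g fun j => (g.2 j).symm), by
    rw [pairMatrix_eq_pairMatrix_iff hne]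
    intro i
    by_cases h : g.1 i = 1 <;> simp [switchPerm, switchFun, h]⟩
  left_inv p := by
    have hp := (pairMatrix_eq_pairMatrix_iff hne).1 p.2
    refine Subtype.ext (Prod.ext (Equiv.ext fun i => ?_) (Equiv.ext fun i => ?_)) <;>
      rcases hp i with ⟨h₁, h₂⟩ | ⟨h₁, h₂⟩ <;> simp [switchPerm, switchFun, h₁, h₂, (hne i).symm]
  right_inv g := by
    refine Subtype.ext (funext fun i => ?_)
    rcases Int.units_eq_one_or (g.1 i) with h | h <;>
      simp [switchPerm, switchFun, h, Ne.symm (hne i)]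

end Decompositions

lemma blow_injective {d : ℕ} : Function.Injective (blow (d := d)) :=
  fun _ _ h => funext₂ fun i j => congrFun₂ h (i, 0) (j, 0)

noncomputable def omegaSetBlowEquiv {d : ℕ} {σ τ : Perm (Fin d)} (hne : ∀ i, σ i ≠ τ i) :
    omegaSet (blow (pairMatrix σ τ)) ≃
      {p : Perm (Fin d) × Perm (Fin d) // pairMatrix p.1 p.2 = pairMatrix σ τ} ×
        (Fin d → ℤˣ) × (Fin d → ℤˣ) × (Fin d → ℤˣ × ℤˣ) :=
  (omegaSetEquiv _ fun i j => pairMatrix_apply_eq_zero_or_eq_one hne i.1 j.1).trans <|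
    (blowUpEquiv _).trans <|
      prodCongr ((rowColProdOneEquiv hne).trans (decompositionsEquiv hne).symm) <|
        prodCongr (rowProdNegOneEquiv hne) <|
          prodCongr (colProdNegOneEquiv hne) (supportedOnPairEquiv hne)

def distinctPairsEquiv (ι : Type*) [DecidableEq ι] :
    {p : Perm ι × Perm ι // ∀ i, p.1 i ≠ p.2 i} ≃ Perm ι × derangements ι where
  toFun p := (p.1.1, ⟨p.1.1⁻¹ * p.1.2, fun i h => p.2 i (by
    rw [Perm.mul_apply, Perm.inv_eq_iff_eq] at h; exact h.symm)⟩)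
  invFun q := ⟨(q.1, q.1 * q.2.1), fun i h => q.2.2 i (q.1.injective h).symm⟩
  left_inv p := Subtype.ext (Prod.ext rfl (mul_inv_cancel_left _ _))
  right_inv q := Prod.ext rfl (Subtype.ext (inv_mul_cancel_left _ _))

lemma pairwise_disjoint_omegaSet_blow (d : ℕ) :
    Pairwise (Function.onFun Disjoint
      fun T : {T : Matrix (Fin d) (Fin d) ℤ // TwoPerLine T} => omegaSet (blow T.1)) :=
  fun T T' hTT' => Set.disjoint_left.2 fun _ hC hC' => hTT' <| Subtype.ext <| blow_injective <|
    eq_of_mem_omegaSet (fun i j => T.2.1 i.1 j.1) (fun i j => T'.2.1 i.1 j.1) hC hC'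

lemma TwoPerLine.nonempty_omegaSet_blow_equiv {d : ℕ} {T : Matrix (Fin d) (Fin d) ℤ}
    (hT : TwoPerLine T) :
    Nonempty (omegaSet (blow T) ≃ {p : Perm (Fin d) × Perm (Fin d) // pairMatrix p.1 p.2 = T} ×
      (Fin d → ℤˣ) × (Fin d → ℤˣ) × (Fin d → ℤˣ × ℤˣ)) := by
  obtain ⟨σ, τ, rfl⟩ := hT.exists_pairMatrix_eq
  exact ⟨omegaSetBlowEquiv (twoPerLine_pairMatrix_iff.1 hT)⟩

lemma ncard_setOf_mem_omegaSet_blow (d : ℕ) :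
    {C : Matrix (Fin d × Fin 2) (Fin d × Fin 2) ℤ |
        ∃ T : Matrix (Fin d) (Fin d) ℤ, TwoPerLine T ∧ C ∈ omegaSet (blow T)}.ncard =
      d.factorial * numDerangements d * 2 ^ (4 * d) := by
  let K := (Fin d → ℤˣ) × (Fin d → ℤˣ) × (Fin d → ℤˣ × ℤˣ)
  have hunion : {C : Matrix (Fin d × Fin 2) (Fin d × Fin 2) ℤ |
      ∃ T : Matrix (Fin d) (Fin d) ℤ, TwoPerLine T ∧ C ∈ omegaSet (blow T)} =
      ⋃ T : {T : Matrix (Fin d) (Fin d) ℤ // TwoPerLine T}, omegaSet (blow T.1) := by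
    ext C; simp
  rw [hunion, ← Nat.card_coe_set_eq,
    Nat.card_congr (Set.unionEqSigmaOfDisjoint (pairwise_disjoint_omegaSet_blow d)),
    Nat.card_congr (sigmaCongrRight fun T => T.2.nonempty_omegaSet_blow_equiv.some),
    Nat.card_congr (sigmaProdDistrib _ _).symm,
    Nat.card_congr (prodCongr (sigmaSubtypeFiberEquivSubtype _
      fun _ => twoPerLine_pairMatrix_iff.symm) (Equiv.refl K)),
    Nat.card_congr (prodCongr (distinctPairsEquiv _) (Equiv.refl K)),
    Nat.card_prod, Nat.card_prod, Nat.card_eq_fintype_card (α := Perm (Fin d)),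
    Fintype.card_perm, Fintype.card_fin, Nat.card_eq_fintype_card (α := derangements (Fin d)),
    card_derangements_fin_eq_numDerangements]
  simp only [K, Nat.card_eq_fintype_card, Fintype.card_prod, Fintype.card_fun,
    Fintype.card_units_int, Fintype.card_fin, mul_pow]
  ring

lemma numDerangements_eq_factorial_mul_sum {K : Type*} [Field K] [CharZero K] (n : ℕ) :
    (numDerangements n : K) = n.factorial * ∑ k ∈ range (n + 1), (-1 : K) ^ k / k.factorial := by
  rw [← Int.cast_natCast (numDerangements n), numDerangements_sum]
  push_cast
  rw [mul_sum]
  refine sum_congr rfl fun k hk => ?_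
  have hk : k ≤ n := mem_range_succ_iff.mp hk
  rw [Nat.ascFactorial_eq_div, add_tsub_cancel_of_le hk]
  push_cast [Nat.factorial_dvd_factorial hk]
  field_simp

theorem t_count_general (d : ℕ) :
    ({C : Matrix (Fin d × Fin 2) (Fin d × Fin 2) ℤ |
        ∃ T : Matrix (Fin d) (Fin d) ℤ, TwoPerLine T ∧ C ∈ omegaSet (blow T)}.ncard : ℚ)
      = 2 ^ (4 * d) * (Nat.factorial d : ℚ) ^ 2 *
          ∑ i ∈ Finset.range (d + 1), (-1 : ℚ) ^ i / (Nat.factorial i : ℚ) := by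
  rw [ncard_setOf_mem_omegaSet_blow]
  push_cast
  rw [numDerangements_eq_factorial_mul_sum]
  ring

theorem t_count (d : ℕ) (hd : 2 ≤ d) :
    ({C : Matrix (Fin d × Fin 2) (Fin d × Fin 2) ℤ |
        ∃ T : Matrix (Fin d) (Fin d) ℤ, TwoPerLine T ∧ C ∈ omegaSet (blow T)}.ncard : ℚ)
      = 2 ^ (4 * d) * (Nat.factorial d : ℚ) ^ 2 *
          ∑ i ∈ Finset.range (d + 1), (-1 : ℚ) ^ i / (Nat.factorial i : ℚ) :=
  t_count_general d
end
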